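/- arXiv:quant-ph/0511069 — 3 statements merged into one kernel-verified Lean document; each statement's English description precedes it below -/
import Mathlib

section
/- For every finite simple graph G with at least one edge, cc(G) = tw(L(G)), where L(G) is the line graph of G. -/
/-- A tree decomposition of a finite simple graph `G`. -/
structure TreeDecomp {V : Type} [Fintype V] (G : SimpleGraph V) : Type 1 where
  ι : Type
  instFin : Fintype ι
  T : SimpleGraph ι
  isTree : T.IsTree
  bag : ι → Finset V
  bag_cover : ∀ v : V, ∃ t : ι, v ∈ bag t
  bag_edge : ∀ u v : V, G.Adj u v → ∃ t : ι, u ∈ bag t ∧ v ∈ bag t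
  bag_conn : ∀ v : V, (T.induce {t : ι | v ∈ bag t}).Connected

/-- The width of a tree decomposition: `max_t |B_t| - 1`. -/
noncomputable def TreeDecomp.width {V : Type} [Fintype V] {G : SimpleGraph V}
    (D : TreeDecomp G) : ℕ :=
  (@Finset.univ D.ι D.instFin).sup (fun t => (D.bag t).card) - 1

/-- The treewidth of a finite simple graph. -/
noncomputable def treewidth {V : Type} [Fintype V] (G : SimpleGraph V) : ℕ :=
  sInf {n : ℕ | ∃ D : TreeDecomp G, D.width = n}


/-- The degree of the merged vertex created when, after the edges in `done` (which ends with
the edge `e` just contracted) have been contracted, we count the edges of `G` not yet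
contracted having at least one endpoint in the connected component (of the spanning subgraph
with edge set `done`) containing the endpoints of `e`. -/
noncomputable def mergedDeg {V : Type} (G : SimpleGraph V) (done : List (Sym2 V))
    (e : Sym2 V) : ℕ :=
  Set.ncard {f : Sym2 V | f ∈ G.edgeSet ∧ f ∉ done ∧
    ∃ x ∈ f, ∃ y ∈ e, (SimpleGraph.fromEdgeSet {g : Sym2 V | g ∈ done}).Reachable x y}

/-- The complexity of a contraction ordering, given as a list of edges: the maximum over all
steps `i` of the degree of the vertex obtained by contracting the `i`-th edge. -/
noncomputable def listComplexity {V : Type} (G : SimpleGraph V) (l : List (Sym2 V)) : ℕ :=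
  Finset.univ.sup (fun i : Fin l.length => mergedDeg G (l.take (i + 1)) (l.get i))

/-- `l` is an ordering of the edge set of `G`. -/
def IsEdgeOrder {V : Type} (G : SimpleGraph V) (l : List (Sym2 V)) : Prop :=
  l.Nodup ∧ ∀ e : Sym2 V, e ∈ l ↔ e ∈ G.edgeSet

/-- The contraction complexity of `G`: the minimum complexity of a contraction ordering. -/
noncomputable def cc {V : Type} (G : SimpleGraph V) : ℕ :=
  sInf {n : ℕ | ∃ l : List (Sym2 V), IsEdgeOrder G l ∧ listComplexity G l = n}

/-!
Both inequalities are proved by explicit constructions.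

Given an ordering `e_1, …, e_m`, a tree decomposition of `L(G)` has a node `k` for each step,
whose bag holds `e_k` and the not yet contracted edges incident with `C_k`, plus a root with an
empty bag; the parent of `k` is the first later node whose edge lies in the bag of `k`. The bag of
`k` minus `e_k` is contained in the bag of the parent, because the parent's edge joins `C_k` to
its own component; so from every node holding an edge, the parents holding it lead to the node of
that edge, and the bag of `k` has `d_k + 1` elements.

Conversely, root a tree decomposition of `L(G)` at `r`, and let `top f` be the node of the
subtree of `f` closest to `r`. Contract the edges in order of decreasing depth of their tops. At
step `i`, every edge met by walking through `C_i` from `e_i` has its top below `top e_i`, and an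
edge that is not yet contracted and is incident with `C_i` shares a bag with such an edge but has
its top no deeper than `top e_i`; since subtrees are connected, it lies in the bag of `top e_i`.
Hence `d_i ≤ |B_{top e_i}| - 1`.
-/

namespace SimpleGraph

variable {ι : Type*} {T : SimpleGraph ι} {r a b c s u : ι}

theorem Connected.exists_walk_support_subset_of_induce {S : Set ι} (hS : (T.induce S).Connected)
    (ha : a ∈ S) (hb : b ∈ S) : ∃ q : T.Walk a b, ∀ x ∈ q.support, x ∈ S := by
  obtain ⟨q⟩ := hS.preconnected ⟨a, ha⟩ ⟨b, hb⟩
  have hq : ∀ x ∈ (q.map (Embedding.induce S).toHom).support, x ∈ S := by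
    simp only [Walk.support_map, List.mem_map]
    rintro _ ⟨y, -, rfl⟩
    exact y.2
  exact ⟨_, hq⟩

/-- For a tree rooted at `r`: `a` is an ancestor of `b`. -/
def IsAncestor (T : SimpleGraph ι) (r a b : ι) : Prop :=
  ∀ p : T.Walk r b, a ∈ p.support

theorem IsAncestor.refl : T.IsAncestor r b b :=
  fun p => p.end_mem_support

theorem IsAncestor.trans (hab : T.IsAncestor r a b) (hbc : T.IsAncestor r b c) :
    T.IsAncestor r a c := by
  classical
  intro p
  exact p.support_takeUntil_subset_support (hbc p) (hab _)

theorem IsAncestor.mem_support_of_not_isAncestor (has : T.IsAncestor r a s)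
    (hab : ¬ T.IsAncestor r a b) (q : T.Walk b s) : a ∈ q.support := by
  obtain ⟨p, hp⟩ := not_forall.mp hab
  exact ((Walk.mem_support_append_iff p q).mp (has _)).resolve_left hp

theorem IsAncestor.eq_of_dist_le (hT : T.Connected) (hab : T.IsAncestor r a b)
    (hd : T.dist r b ≤ T.dist r a) : a = b := by
  classical
  obtain ⟨p, hp⟩ := hT.exists_walk_length_eq_dist r b
  have hsplit := congrArg Walk.length (p.take_spec (hab p))
  rw [Walk.length_append, hp] at hsplit
  have := T.dist_le (p.takeUntil a (hab p))
  have := T.dist_le (p.dropUntil a (hab p))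
  exact (hT a b).dist_eq_zero_iff.mp (by omega)

/-- Otherwise the last edge of a shortest path from `r` to `u` would not be a bridge. -/
theorem IsTree.isAncestor_of_isMinOn_dist (hT : T.IsTree) {S : Set ι}
    (hS : (T.induce S).Connected) (hu : u ∈ S) (hmin : IsMinOn (T.dist r) S u) (hs : s ∈ S) :
    T.IsAncestor r u s := by
  classical
  intro p
  by_contra hup
  obtain ⟨P, hP⟩ := hT.connected.exists_walk_length_eq_dist u r
  cases P with
  | nil => exact hup p.start_mem_support
  | @cons _ u' _ hadj Q =>
    rw [dist_comm, Walk.length_cons] at hP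
    have hu'S : u' ∉ S := fun h => by
      have := isMinOn_iff.mp hmin u' h
      have := T.dist_le Q.reverse
      simp only [Walk.length_reverse] at this
      omega
    have huQ : u ∉ Q.support := fun h => by
      have := T.dist_le (Q.dropUntil u h).reverse
      have := Q.length_dropUntil_le_length h
      simp only [Walk.length_reverse] at *
      omega
    obtain ⟨q, hqS⟩ := hS.exists_walk_support_subset_of_induce hs hu
    have hbridge := isBridge_iff_forall_walk_mem_edges.mp
      (isAcyclic_iff_forall_adj_isBridge.mp hT.isAcyclic hadj.symm)
      (Q.append (p.append q))
    rw [Walk.edges_append, Walk.edges_append, List.mem_append, List.mem_append] at hbridge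
    rcases hbridge with h | h | h
    · exact huQ (Q.snd_mem_support_of_mem_edges h)
    · exact hup (p.snd_mem_support_of_mem_edges h)
    · exact hu'S (hqS _ (Walk.fst_mem_support_of_mem_edges _ h))

theorem reachable_of_forall_exists_adj_gt {ι : Type*} [Preorder ι] [WellFoundedGT ι]
    {H : SimpleGraph ι} {m : ι} (h : ∀ i, i ≠ m → ∃ j, i < j ∧ H.Adj i j) (i : ι) :
    H.Reachable i m := by
  induction i using WellFoundedGT.induction with
  | _ i ih =>
    by_cases him : i = m
    · exact him ▸ .refl i
    obtain ⟨j, hij, hadj⟩ := h i him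
    exact hadj.reachable.trans (ih j hij)

theorem connected_of_forall_exists_adj_gt {ι : Type*} [Preorder ι] [WellFoundedGT ι]
    {H : SimpleGraph ι} (m : ι) (h : ∀ i, i ≠ m → ∃ j, i < j ∧ H.Adj i j) :
    H.Connected :=
  (connected_iff_exists_forall_reachable H).mpr
    ⟨m, fun i => (reachable_of_forall_exists_adj_gt h i).symm⟩

end SimpleGraph

namespace TreeDecomp

open SimpleGraph

variable {W : Type} [Fintype W] {H : SimpleGraph W} (D : TreeDecomp H) (r : D.ι)
  {v w : W} {a b s t : D.ι}

theorem card_bag_le_width_add_one (t : D.ι) : (D.bag t).card ≤ D.width + 1 := by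
  let := D.instFin
  have := Finset.le_sup (f := fun t => (D.bag t).card) (Finset.mem_univ t)
  unfold width
  omega

theorem width_le_of_card_bag_le {k : ℕ} (h : ∀ t, (D.bag t).card ≤ k + 1) :
    D.width ≤ k := by
  let := D.instFin
  have := Finset.sup_le (s := Finset.univ) (f := fun t => (D.bag t).card) fun t _ => h t
  unfold width
  omega

theorem mem_bag_of_isAncestor (has : D.T.IsAncestor r a s) (hab : ¬ D.T.IsAncestor r a b)
    (hb : v ∈ D.bag b) (hs : v ∈ D.bag s) : v ∈ D.bag a := by
  obtain ⟨q, hq⟩ := (D.bag_conn v).exists_walk_support_subset_of_induce hb hs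
  exact hq a (has.mem_support_of_not_isAncestor hab q)

noncomputable def top (v : W) : D.ι :=
  Function.argminOn (D.T.dist r) {t | v ∈ D.bag t} (D.bag_cover v)

theorem top_mem_bag (v : W) : v ∈ D.bag (D.top r v) :=
  Function.argminOn_mem _ {t | v ∈ D.bag t} _

theorem isAncestor_top (hs : v ∈ D.bag s) : D.T.IsAncestor r (D.top r v) s :=
  D.isTree.isAncestor_of_isMinOn_dist (D.bag_conn v) (D.top_mem_bag r v)
    (isMinOn_iff.mpr fun _ ht => Function.argminOn_le _ {t | v ∈ D.bag t} ht) hs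

theorem isAncestor_top_or_mem_bag (ht : D.T.IsAncestor r t (D.top r v))
    (hvw : v = w ∨ H.Adj v w) : D.T.IsAncestor r t (D.top r w) ∨ w ∈ D.bag t := by
  rcases hvw with rfl | hvw
  · exact .inl ht
  obtain ⟨s, hvs, hws⟩ := D.bag_edge v w hvw
  by_cases htw : D.T.IsAncestor r t (D.top r w)
  · exact .inl htw
  · exact .inr (D.mem_bag_of_isAncestor r (ht.trans (D.isAncestor_top r hvs)) htw
      (D.top_mem_bag r w) hws)

theorem isAncestor_top_of_dist_le (ht : D.T.IsAncestor r t (D.top r v))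
    (hvw : v = w ∨ H.Adj v w) (hd : D.T.dist r t ≤ D.T.dist r (D.top r w)) :
    D.T.IsAncestor r t (D.top r w) := by
  refine (D.isAncestor_top_or_mem_bag r ht hvw).elim id fun hw => ?_
  rw [(D.isAncestor_top r hw).eq_of_dist_le D.isTree.connected hd]
  exact IsAncestor.refl

theorem mem_bag_of_dist_le (ht : D.T.IsAncestor r t (D.top r v))
    (hvw : v = w ∨ H.Adj v w) (hd : D.T.dist r (D.top r w) ≤ D.T.dist r t) : w ∈ D.bag t := by
  refine (D.isAncestor_top_or_mem_bag r ht hvw).elim (fun htw => ?_) id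
  rw [htw.eq_of_dist_le D.isTree.connected hd]
  exact D.top_mem_bag r w

end TreeDecomp

section Contraction

open SimpleGraph

variable {V : Type} {G : SimpleGraph V} {done done' : List (Sym2 V)} {e f g : Sym2 V} {x y : V}

def Touches (done : List (Sym2 V)) (f e : Sym2 V) : Prop :=
  ∃ x ∈ f, ∃ y ∈ e, (fromEdgeSet {g | g ∈ done}).Reachable x y

theorem touches_of_mem_of_mem (hf : x ∈ f) (he : x ∈ e) : Touches done f e :=
  ⟨x, hf, x, he, .refl x⟩

theorem touches_self (done : List (Sym2 V)) (f : Sym2 V) : Touches done f f := by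
  induction f using Sym2.ind with
  | _ x y => exact touches_of_mem_of_mem (Sym2.mem_mk_left x y) (Sym2.mem_mk_left x y)

theorem Touches.mono (h : Touches done f e) (hsub : done ⊆ done') : Touches done' f e := by
  obtain ⟨x, hx, y, hy, hxy⟩ := h
  exact ⟨x, hx, y, hy, hxy.mono (fromEdgeSet_mono fun g hg => hsub hg)⟩

theorem reachable_of_mem_done (hg : g ∈ done) (hx : x ∈ g) (hy : y ∈ g) :
    (fromEdgeSet {g | g ∈ done}).Reachable x y := by
  by_cases hxy : x = y
  · exact hxy ▸ .refl x
  · refine Adj.reachable ((fromEdgeSet_adj _).mpr ⟨?_, hxy⟩)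
    rwa [← (Sym2.mem_and_mem_iff hxy).mp ⟨hx, hy⟩]

theorem Touches.trans_of_mem (hf : Touches done f e) (hg : Touches done g e) (he : e ∈ done) :
    Touches done f g := by
  obtain ⟨x, hx, y, hy, hxy⟩ := hf
  obtain ⟨x', hx', y', hy', hxy'⟩ := hg
  exact ⟨x, hx, x', hx', hxy.trans ((reachable_of_mem_done he hy hy').trans hxy'.symm)⟩

theorem eq_or_lineGraph_adj_of_mem {f g : G.edgeSet} (hf : x ∈ (f : Sym2 V))
    (hg : x ∈ (g : Sym2 V)) : f = g ∨ G.lineGraph.Adj f g :=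
  or_iff_not_imp_left.mpr fun hfg => lineGraph_adj_iff_exists.mpr ⟨hfg, x, hf, hg⟩

open Classical in
theorem mergedDeg_eq_card [Fintype G.edgeSet] (done : List (Sym2 V)) (e : Sym2 V) :
    mergedDeg G done e =
      (Finset.univ.filter fun f : G.edgeSet => ↑f ∉ done ∧ Touches done f e).card := by
  have : {f : Sym2 V | f ∈ G.edgeSet ∧ f ∉ done ∧ Touches done f e} =
      Subtype.val '' ((Finset.univ.filter fun f : G.edgeSet => ↑f ∉ done ∧ Touches done f e :
        Finset G.edgeSet) : Set G.edgeSet) := by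
    ext f
    simp only [Set.mem_ofPred_eq, Finset.coe_filter, Finset.mem_univ, true_and, Set.mem_image,
      Subtype.exists, exists_and_right, exists_eq_right]
    tauto
  rw [mergedDeg, ← Set.ncard_coe_finset, ← Set.ncard_image_of_injective _ Subtype.val_injective,
    ← this]
  rfl

theorem mergedDeg_le_listComplexity (l : List (Sym2 V)) (i : Fin l.length) :
    mergedDeg G (l.take (i + 1)) l[i] ≤ listComplexity G l :=
  Finset.le_sup (f := fun i : Fin l.length => mergedDeg G (l.take (i + 1)) (l.get i))
    (Finset.mem_univ i)

theorem listComplexity_le {l : List (Sym2 V)} {k : ℕ}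
    (h : ∀ i : Fin l.length, mergedDeg G (l.take (i + 1)) l[i] ≤ k) :
    listComplexity G l ≤ k :=
  Finset.sup_le fun i _ => h i

theorem isEdgeOrder_of_perm [Fintype G.edgeSet] {l : List (Sym2 V)}
    (hl : l.Perm G.edgeFinset.toList) : IsEdgeOrder G l :=
  ⟨hl.nodup_iff.mpr (Finset.nodup_toList _), fun e => by simp [hl.mem_iff]⟩

theorem exists_isEdgeOrder_pairwise [Fintype G.edgeSet] (key : Sym2 V → ℕ) :
    ∃ l, IsEdgeOrder G l ∧ l.Pairwise (fun a b => key b ≤ key a) := by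
  refine ⟨G.edgeFinset.toList.mergeSort fun a b => key b ≤ key a,
    isEdgeOrder_of_perm (List.mergeSort_perm _ _), ?_⟩
  simpa using List.pairwise_mergeSort (le := fun a b => decide (key b ≤ key a))
    (by simp only [decide_eq_true_eq]; omega)
    (by simp only [Bool.or_eq_true, decide_eq_true_eq]; omega) _

theorem cc_le {l : List (Sym2 V)} (hl : IsEdgeOrder G l) : cc G ≤ listComplexity G l :=
  Nat.sInf_le (s := {n | ∃ l, IsEdgeOrder G l ∧ listComplexity G l = n}) ⟨l, hl, rfl⟩

theorem exists_listComplexity_eq_cc [Fintype G.edgeSet] :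
    ∃ l, IsEdgeOrder G l ∧ listComplexity G l = cc G :=
  Nat.sInf_mem (s := {n | ∃ l, IsEdgeOrder G l ∧ listComplexity G l = n})
    ⟨_, _, isEdgeOrder_of_perm (List.Perm.refl G.edgeFinset.toList), rfl⟩

end Contraction

theorem treewidth_le {W : Type} [Fintype W] {H : SimpleGraph W} (D : TreeDecomp H) :
    treewidth H ≤ D.width :=
  Nat.sInf_le (s := {n | ∃ D : TreeDecomp H, D.width = n}) ⟨D, rfl⟩

theorem exists_width_eq_treewidth {W : Type} [Fintype W] {H : SimpleGraph W}
    (D : TreeDecomp H) : ∃ D' : TreeDecomp H, D'.width = treewidth H :=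
  Nat.sInf_mem (s := {n | ∃ D : TreeDecomp H, D.width = n}) ⟨_, D, rfl⟩

section TreeDecompToOrder

open SimpleGraph

variable {V : Type} {G : SimpleGraph V} [Fintype G.edgeSet] (D : TreeDecomp G.lineGraph)
  (r : D.ι) (e : G.edgeSet) {done : List (Sym2 V)} (hdoneE : ∀ g ∈ done, g ∈ G.edgeSet)
  (hdone : ∀ g : G.edgeSet, ↑g ∈ done → D.T.dist r (D.top r e) ≤ D.T.dist r (D.top r g))
  (hundone : ∀ g : G.edgeSet, ↑g ∉ done → D.T.dist r (D.top r g) ≤ D.T.dist r (D.top r e))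

include hdoneE hdone in
theorem exists_isAncestor_top_of_reachable {x z : V}
    (hxz : (fromEdgeSet {g | g ∈ done}).Reachable x z) :
    (∃ f : G.edgeSet, D.T.IsAncestor r (D.top r e) (D.top r f) ∧ x ∈ (f : Sym2 V)) →
    ∃ f : G.edgeSet, D.T.IsAncestor r (D.top r e) (D.top r f) ∧ z ∈ (f : Sym2 V) := by
  obtain ⟨w⟩ := hxz
  induction w with
  | nil => exact id
  | @cons a b _ hadj _ ih =>
    rintro ⟨f, hf, haf⟩
    obtain ⟨hab, -⟩ := (fromEdgeSet_adj _).mp hadj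
    let g : G.edgeSet := ⟨s(a, b), hdoneE _ hab⟩
    exact ih ⟨g, D.isAncestor_top_of_dist_le r hf
      (eq_or_lineGraph_adj_of_mem haf (Sym2.mem_mk_left a b)) (hdone g hab),
      Sym2.mem_mk_right a b⟩

include hdoneE hdone hundone in
theorem mem_bag_top_of_touches {g : G.edgeSet} (hg : ↑g ∉ done) (hge : Touches done g e) :
    g ∈ D.bag (D.top r e) := by
  obtain ⟨x, hxg, y, hye, hxy⟩ := hge
  obtain ⟨f, hf, hxf⟩ := exists_isAncestor_top_of_reachable D r e hdoneE hdone hxy.symm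
    ⟨e, IsAncestor.refl, hye⟩
  exact D.mem_bag_of_dist_le r hf (eq_or_lineGraph_adj_of_mem hxf hxg) (hundone g hg)

include hdoneE hdone hundone in
theorem mergedDeg_le_width (he : ↑e ∈ done) : mergedDeg G done e ≤ D.width := by
  classical
  rw [mergedDeg_eq_card]
  calc _ ≤ ((D.bag (D.top r e)).erase e).card := by
        refine Finset.card_le_card fun g hg => ?_
        obtain ⟨hg, hge⟩ := (Finset.mem_filter.mp hg).2
        exact Finset.mem_erase.mpr ⟨fun h => hg (h ▸ he),
          mem_bag_top_of_touches D r e hdoneE hdone hundone hg hge⟩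
    _ = (D.bag (D.top r e)).card - 1 := Finset.card_erase_of_mem (D.top_mem_bag r e)
    _ ≤ D.width := by have := D.card_bag_le_width_add_one (D.top r e); omega

/-- Contract the edges in order of decreasing depth of their tops. -/
theorem exists_isEdgeOrder_listComplexity_le_width :
    ∃ l, IsEdgeOrder G l ∧ listComplexity G l ≤ D.width := by
  classical
  obtain ⟨r⟩ := D.isTree.connected.nonempty
  let depth (g : Sym2 V) : ℕ := if h : g ∈ G.edgeSet then D.T.dist r (D.top r ⟨g, h⟩) else 0
  have hdepth (g : G.edgeSet) : depth g = D.T.dist r (D.top r g) := dif_pos g.2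
  obtain ⟨l, hl, hsorted⟩ := exists_isEdgeOrder_pairwise (G := G) depth
  have hlE (g) (hg : g ∈ l) : g ∈ G.edgeSet := (hl.2 g).mp hg
  refine ⟨l, hl, listComplexity_le fun i => ?_⟩
  have hdrop : l[i] ∈ l.drop i := by
    rw [List.drop_eq_getElem_cons i.2]
    exact List.mem_cons_self
  have htake : l[i] ∈ l.take (i + 1) := by
    rw [List.take_add_one, List.getElem?_eq_getElem i.2]
    exact List.mem_append_right _ (List.mem_singleton_self _)
  refine mergedDeg_le_width D r ⟨l[i], hlE _ (List.getElem_mem _)⟩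
    (fun g hg => hlE g (List.mem_of_mem_take hg)) (fun g hg => ?_) (fun g hg => ?_) htake
  · rw [← hdepth, ← hdepth]
    rw [List.take_add_one, List.getElem?_eq_getElem i.2, Option.toList_some, List.mem_append,
      List.mem_singleton] at hg
    rcases hg with hg | hg
    · exact hsorted.rel_of_mem_take_of_mem_drop hg hdrop
    · rw [hg]
      exact le_rfl
  · rw [← hdepth, ← hdepth]
    refine hsorted.rel_of_mem_take_of_mem_drop htake ?_
    have := (hl.2 g).mpr g.2
    rw [← l.take_append_drop (i + 1)] at this
    exact (List.mem_append.mp this).resolve_left hg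

end TreeDecompToOrder

section ParentGraph

open SimpleGraph

variable {n : ℕ} (p : Fin (n + 1) → Fin (n + 1))

def parentGraph : SimpleGraph (Fin (n + 1)) :=
  SimpleGraph.fromRel fun i j => p i = j

theorem parentGraph_adj {i j : Fin (n + 1)} :
    (parentGraph p).Adj i j ↔ i ≠ j ∧ (p i = j ∨ p j = i) :=
  fromRel_adj _ _ _

theorem parentGraph_adj_parent {i : Fin (n + 1)} (h : i ≠ p i) : (parentGraph p).Adj i (p i) :=
  (parentGraph_adj p).mpr ⟨h, .inl rfl⟩

variable {p} (hp : ∀ i, i ≠ Fin.last n → i < p i)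

include hp in
theorem parentGraph_connected : (parentGraph p).Connected :=
  connected_of_forall_exists_adj_gt (Fin.last n) fun i hi =>
    ⟨p i, hp i hi, parentGraph_adj_parent p (hp i hi).ne⟩

include hp in
theorem card_edgeSet_parentGraph (hlast : p (Fin.last n) = Fin.last n) :
    Nat.card (parentGraph p).edgeSet = n := by
  let edge (i : Fin n) : (parentGraph p).edgeSet :=
    ⟨s(i.castSucc, p i.castSucc), parentGraph_adj_parent p (hp _ i.castSucc_ne_last).ne⟩
  have hbij : Function.Bijective edge := by
    refine ⟨fun i j hij => ?_, ?_⟩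
    · rcases Sym2.eq_iff.mp (congrArg Subtype.val hij) with ⟨h, -⟩ | ⟨h, h'⟩
      · exact Fin.castSucc_injective n h
      · have hi := hp _ i.castSucc_ne_last
        have hj := hp _ j.castSucc_ne_last
        rw [h'] at hi
        rw [← h] at hj
        exact absurd (hi.trans hj) (lt_irrefl _)
    · rintro ⟨g, hg⟩
      induction g using Sym2.ind with
      | _ x y =>
      obtain ⟨hxy, hpxy | hpyx⟩ := (parentGraph_adj p).mp hg
      · have hx : x ≠ Fin.last n := fun h => hxy (by rw [← hpxy, h, hlast])
        exact ⟨x.castPred hx, Subtype.ext (by simp [edge, hpxy])⟩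
      · have hy : y ≠ Fin.last n := fun h => hxy (by rw [← hpyx, h, hlast])
        exact ⟨y.castPred hy, Subtype.ext (by simp [edge, hpyx, Sym2.eq_swap])⟩
  rw [← Nat.card_eq_of_bijective edge hbij, Nat.card_eq_fintype_card, Fintype.card_fin]

include hp in
theorem isTree_parentGraph (hlast : p (Fin.last n) = Fin.last n) : (parentGraph p).IsTree :=
  isTree_iff_connected_and_card.mpr ⟨parentGraph_connected hp,
    by rw [card_edgeSet_parentGraph hp hlast, Nat.card_eq_fintype_card, Fintype.card_fin]⟩

end ParentGraph

theorem List.Nodup.getElem_mem_take_iff {α : Type*} {l : List α} (hl : l.Nodup) {m k : ℕ}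
    (hm : m < l.length) : l[m] ∈ l.take k ↔ m < k := by
  rw [List.mem_take_iff_getElem]
  constructor
  · rintro ⟨j, hj, hjm⟩
    rw [hl.getElem_inj_iff] at hjm
    omega
  · exact fun h => ⟨m, by omega, rfl⟩

section OrderToTreeDecomp

open SimpleGraph

variable {V : Type} {G : SimpleGraph V} (l : List (Sym2 V)) {k m : ℕ} {f : Sym2 V}

def InStepBag (k : ℕ) (f : Sym2 V) : Prop :=
  f ∉ l.take k ∧ ∃ e ∈ l[k]?, Touches (l.take (k + 1)) f e

open Classical in
noncomputable def stepParent (k : ℕ) : ℕ :=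
  if ∃ j, k < j ∧ ∃ g ∈ l[j]?, InStepBag l k g then
    sInf {j | k < j ∧ ∃ g ∈ l[j]?, InStepBag l k g}
  else l.length

variable {l}

theorem inStepBag_iff (hk : k < l.length) :
    InStepBag l k f ↔ f ∉ l.take k ∧ Touches (l.take (k + 1)) f l[k] := by
  simp [InStepBag, List.getElem?_eq_getElem hk]

theorem lt_length_of_inStepBag (h : InStepBag l k f) : k < l.length := by
  obtain ⟨-, e, he, -⟩ := h
  exact (List.getElem?_eq_some_iff.mp he).1

theorem le_of_inStepBag (hl : l.Nodup) (hm : m < l.length) (h : InStepBag l k l[m]) : k ≤ m :=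
  not_lt.mp fun hmk => h.1 ((hl.getElem_mem_take_iff hm).mpr hmk)

theorem inStepBag_self (hl : l.Nodup) (hk : k < l.length) : InStepBag l k l[k] :=
  (inStepBag_iff hk).mpr ⟨fun h => lt_irrefl k ((hl.getElem_mem_take_iff hk).mp h),
    touches_self _ _⟩

theorem inStepBag_of_mem_of_mem (hl : l.Nodup) (hkm : k < m) (hm : m < l.length) {x : V}
    (hk : x ∈ l[k]) (hx : x ∈ l[m]) : InStepBag l k l[m] :=
  (inStepBag_iff (hkm.trans hm)).mpr
    ⟨fun h => absurd ((hl.getElem_mem_take_iff hm).mp h) (by omega),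
      touches_of_mem_of_mem hx hk⟩

theorem stepParent_le_length : stepParent l k ≤ l.length := by
  unfold stepParent
  split_ifs with h
  · obtain ⟨-, g, hg, -⟩ := Nat.sInf_mem h
    exact (List.getElem?_eq_some_iff.mp hg).1.le
  · exact le_rfl

theorem lt_stepParent (hk : k < l.length) : k < stepParent l k := by
  unfold stepParent
  split_ifs with h
  · exact (Nat.sInf_mem h).1
  · exact hk

theorem stepParent_length : stepParent l l.length = l.length := by
  unfold stepParent
  rw [if_neg]
  rintro ⟨j, hj, g, hg, -⟩
  exact absurd (List.getElem?_eq_some_iff.mp hg).1 (by omega)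

/-- The parent's edge touches the component of `l[k]`, which is therefore contained in the
parent's component. -/
theorem inStepBag_stepParent (hl : l.Nodup) (hkm : k < m) (hm : m < l.length)
    (h : InStepBag l k l[m]) : stepParent l k ≤ m ∧ InStepBag l (stepParent l k) l[m] := by
  have hex : ∃ j, k < j ∧ ∃ g ∈ l[j]?, InStepBag l k g :=
    ⟨m, hkm, l[m], List.getElem?_eq_getElem hm, h⟩
  have hjm : stepParent l k ≤ m := by
    rw [stepParent, if_pos hex]
    exact Nat.sInf_le ⟨hkm, l[m], List.getElem?_eq_getElem hm, h⟩
  obtain ⟨hkj, g, hg, hgbag⟩ :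
      k < stepParent l k ∧ ∃ g ∈ l[stepParent l k]?, InStepBag l k g := by
    rw [stepParent, if_pos hex]
    exact Nat.sInf_mem hex
  obtain ⟨hj, rfl⟩ := List.getElem?_eq_some_iff.mp hg
  have hk : k < l.length := hkm.trans hm
  rw [inStepBag_iff hk] at h hgbag
  have hsub : l.take (k + 1) ⊆ l.take (stepParent l k + 1) := l.take_subset_take_left (by omega)
  refine ⟨hjm, (inStepBag_iff hj).mpr ⟨fun hmem => ?_, ?_⟩⟩
  · exact absurd ((hl.getElem_mem_take_iff hm).mp hmem) (by omega)
  · exact (h.2.mono hsub).trans_of_mem (hgbag.2.mono hsub)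
      ((hl.getElem_mem_take_iff hk).mpr (by omega))

variable (G l) [Fintype G.edgeSet]

open Classical in
noncomputable def stepBag (k : ℕ) : Finset G.edgeSet :=
  Finset.univ.filter fun f => InStepBag l k f

variable {G l}

theorem mem_stepBag {g : G.edgeSet} : g ∈ stepBag G l k ↔ InStepBag l k g := by
  simp [stepBag]

theorem card_stepBag_le (hl : IsEdgeOrder G l) (k : ℕ) :
    (stepBag G l k).card ≤ listComplexity G l + 1 := by
  classical
  by_cases hk : k < l.length
  · let e : G.edgeSet := ⟨l[k], (hl.2 _).mp (List.getElem_mem hk)⟩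
    have hsub : stepBag G l k ⊆ insert e
        (Finset.univ.filter fun g : G.edgeSet => ↑g ∉ l.take (k + 1) ∧
          Touches (l.take (k + 1)) g l[k]) := by
      intro g hg
      obtain ⟨hgk, hgt⟩ := (inStepBag_iff hk).mp (mem_stepBag.mp hg)
      by_cases hge : g = e
      · exact hge ▸ Finset.mem_insert_self _ _
      refine Finset.mem_insert_of_mem (Finset.mem_filter.mpr ⟨Finset.mem_univ _, ?_, hgt⟩)
      rw [List.take_add_one, List.getElem?_eq_getElem hk, Option.toList_some, List.mem_append,
        List.mem_singleton]
      exact fun h => h.elim hgk fun h => hge (Subtype.ext h)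
    calc (stepBag G l k).card ≤ mergedDeg G (l.take (k + 1)) l[k] + 1 := by
          rw [mergedDeg_eq_card]
          exact (Finset.card_le_card hsub).trans (Finset.card_insert_le _ _)
      _ ≤ listComplexity G l + 1 :=
          Nat.add_le_add_right (mergedDeg_le_listComplexity l ⟨k, hk⟩) 1
  · have : stepBag G l k = ∅ := Finset.eq_empty_of_forall_notMem fun g hg =>
      hk (lt_length_of_inStepBag (mem_stepBag.mp hg))
    simp [this]

variable (l) in
noncomputable def stepTree : SimpleGraph (Fin (l.length + 1)) :=
  parentGraph fun i => ⟨stepParent l i, Nat.lt_succ_of_le stepParent_le_length⟩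

theorem stepTree_adj_stepParent {i : Fin (l.length + 1)} (hi : (i : ℕ) < l.length) :
    (stepTree l).Adj i ⟨stepParent l i, Nat.lt_succ_of_le stepParent_le_length⟩ :=
  parentGraph_adj_parent _ (Fin.ne_of_lt (Fin.lt_def.mpr (lt_stepParent hi)))

theorem isTree_stepTree : (stepTree l).IsTree :=
  isTree_parentGraph (fun i hi => Fin.lt_def.mpr (lt_stepParent (Fin.val_lt_last hi)))
    (Fin.ext (by simpa using stepParent_length))

theorem exists_inStepBag_of_mem_of_mem (hl : l.Nodup) {f g : Sym2 V} (hf : f ∈ l) (hg : g ∈ l)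
    {x : V} (hxf : x ∈ f) (hxg : x ∈ g) : ∃ k, InStepBag l k f ∧ InStepBag l k g := by
  obtain ⟨i, hi, rfl⟩ := List.getElem_of_mem hf
  obtain ⟨j, hj, rfl⟩ := List.getElem_of_mem hg
  rcases lt_trichotomy i j with hij | rfl | hji
  · exact ⟨i, inStepBag_self hl hi, inStepBag_of_mem_of_mem hl hij hj hxf hxg⟩
  · exact ⟨i, inStepBag_self hl hi, inStepBag_self hl hi⟩
  · exact ⟨j, inStepBag_of_mem_of_mem hl hji hi hxg hxf, inStepBag_self hl hj⟩

theorem connected_induce_stepBag (hl : l.Nodup) {f : G.edgeSet} (hf : ↑f ∈ l) :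
    ((stepTree l).induce {t : Fin (l.length + 1) | f ∈ stepBag G l t}).Connected := by
  obtain ⟨m, hm, hfm⟩ := List.getElem_of_mem hf
  have hmem {k : ℕ} : f ∈ stepBag G l k ↔ InStepBag l k l[m] := hfm ▸ mem_stepBag
  refine connected_of_forall_exists_adj_gt ⟨⟨m, by omega⟩, hmem.mpr (inStepBag_self hl hm)⟩
    fun ⟨i, hi⟩ him => ?_
  have him : (i : ℕ) < m := lt_of_le_of_ne (le_of_inStepBag hl hm (hmem.mp hi))
    fun h => him (Subtype.ext (Fin.ext h))
  obtain ⟨-, hpar⟩ := inStepBag_stepParent hl him hm (hmem.mp hi)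
  exact ⟨⟨_, hmem.mpr hpar⟩, Fin.lt_def.mpr (lt_stepParent (him.trans hm)),
    stepTree_adj_stepParent (him.trans hm)⟩

noncomputable def TreeDecomp.ofEdgeOrder (hl : IsEdgeOrder G l) : TreeDecomp G.lineGraph where
  ι := Fin (l.length + 1)
  instFin := inferInstance
  T := stepTree l
  isTree := isTree_stepTree
  bag k := stepBag G l k
  bag_cover f := by
    obtain ⟨m, hm, hfm⟩ := List.getElem_of_mem ((hl.2 f).mpr f.2)
    exact ⟨⟨m, by omega⟩, mem_stepBag.mpr (hfm ▸ inStepBag_self hl.1 hm)⟩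
  bag_edge f g hfg := by
    obtain ⟨-, x, hxf, hxg⟩ := lineGraph_adj_iff_exists.mp hfg
    obtain ⟨k, hkf, hkg⟩ :=
      exists_inStepBag_of_mem_of_mem hl.1 ((hl.2 f).mpr f.2) ((hl.2 g).mpr g.2) hxf hxg
    have hk := lt_length_of_inStepBag hkf
    exact ⟨⟨k, by omega⟩, mem_stepBag.mpr hkf, mem_stepBag.mpr hkg⟩
  bag_conn f := connected_induce_stepBag hl.1 ((hl.2 f).mpr f.2)

theorem TreeDecomp.width_ofEdgeOrder_le (hl : IsEdgeOrder G l) :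
    (TreeDecomp.ofEdgeOrder hl).width ≤ listComplexity G l :=
  width_le_of_card_bag_le _ fun (k : Fin (l.length + 1)) => card_stepBag_le hl k

end OrderToTreeDecomp

theorem cc_eq_treewidth_lineGraph_general
    {V : Type} [Fintype V] [DecidableEq V] (G : SimpleGraph V) [DecidableRel G.Adj] :
    cc G = treewidth G.lineGraph := by
  obtain ⟨l, hl, hlcc⟩ := exists_listComplexity_eq_cc (G := G)
  apply le_antisymm
  · obtain ⟨D, hD⟩ := exists_width_eq_treewidth (TreeDecomp.ofEdgeOrder hl)
    obtain ⟨l', hl', hl'D⟩ := exists_isEdgeOrder_listComplexity_le_width D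
    calc cc G ≤ listComplexity G l' := cc_le hl'
      _ ≤ D.width := hl'D
      _ = treewidth G.lineGraph := hD
  · calc treewidth G.lineGraph ≤ (TreeDecomp.ofEdgeOrder hl).width := treewidth_le _
      _ ≤ listComplexity G l := TreeDecomp.width_ofEdgeOrder_le hl
      _ = cc G := hlcc

/-- For every finite simple graph `G` with at least one edge,
`cc(G) = tw(L(G))`, where `L(G)` is the line graph of `G`. -/
theorem cc_eq_treewidth_lineGraph
    {V : Type} [Fintype V] [DecidableEq V] (G : SimpleGraph V) [DecidableRel G.Adj]
    (hE : G.edgeFinset.Nonempty) :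
    cc G = treewidth G.lineGraph :=
  cc_eq_treewidth_lineGraph_general G
end

section
/- For every finite simple graph G with at least one edge and no isolated vertices, tw(G) ≤ 2·tw(L(G)) + 1, where L(G) is the line graph of G. -/
/-- trivial decomposition -/
noncomputable def trivialDecomp {W : Type} [Fintype W] (H : SimpleGraph W) : TreeDecomp H where
  ι := Unit
  instFin := inferInstance
  T := ⊥
  isTree := ⟨⟨fun a b => by cases a; cases b; exact SimpleGraph.Reachable.refl _⟩,
    SimpleGraph.isAcyclic_bot⟩
  bag _ := Finset.univ
  bag_cover v := ⟨(), Finset.mem_univ v⟩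
  bag_edge u v _ := ⟨(), Finset.mem_univ u, Finset.mem_univ v⟩
  bag_conn v := by
    rw [SimpleGraph.connected_iff]
    refine ⟨?_, ?_⟩
    · intro a b
      rw [Subsingleton.elim a b]
    · exact ⟨⟨(), by simp⟩⟩

lemma treewidth_set_nonempty {W : Type} [Fintype W] (H : SimpleGraph W) :
    {n : ℕ | ∃ D : TreeDecomp H, D.width = n}.Nonempty :=
  ⟨(trivialDecomp H).width, trivialDecomp H, rfl⟩

lemma reach_mono {ι : Type} {T : SimpleGraph ι} {A B : Set ι} (hAB : A ⊆ B)
    {x y : ι} (hx : x ∈ A) (hy : y ∈ A)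
    (h : (T.induce A).Reachable ⟨x, hx⟩ ⟨y, hy⟩) :
    (T.induce B).Reachable ⟨x, hAB hx⟩ ⟨y, hAB hy⟩ := by
  exact h.map (RelHom.mk (fun a => ⟨a.1, hAB a.2⟩) (fun h => h) :
    T.induce A →g T.induce B)

/-- For every finite simple graph `G` with at least one edge and no
isolated vertices, `tw(G) ≤ 2·tw(L(G)) + 1`. -/
theorem treewidth_le_two_mul_treewidth_lineGraph
    {V : Type} [Fintype V] [DecidableEq V] (G : SimpleGraph V) [DecidableRel G.Adj]
    (hE : G.edgeFinset.Nonempty) (hiso : ∀ v : V, ∃ u : V, G.Adj u v) :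
    treewidth G ≤ 2 * treewidth G.lineGraph + 1 := by
  obtain ⟨D, hD⟩ := Nat.sInf_mem (treewidth_set_nonempty G.lineGraph)
  letI := D.instFin
  -- endpoints of a Sym2
  let ends : Sym2 V → Finset V := fun e => Finset.univ.filter (· ∈ e)
  have mem_ends : ∀ (e : Sym2 V) (v : V), v ∈ ends e ↔ v ∈ e := by
    intro e v; simp [ends]
  have card_ends : ∀ e : Sym2 V, (ends e).card ≤ 2 := by
    intro e
    induction e with
    | _ a b =>
      have hsub : ends s(a, b) ⊆ {a, b} := by
        intro v hv
        rw [mem_ends] at hv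
        simpa using hv
      calc (ends s(a, b)).card ≤ ({a, b} : Finset V).card := Finset.card_le_card hsub
        _ ≤ 2 := Finset.card_insert_le a {b} |>.trans (by simp)
  classical
  let bag' : D.ι → Finset V := fun t => (D.bag t).biUnion (fun e => ends (e : Sym2 V))
  have mem_bag' : ∀ (t : D.ι) (v : V), v ∈ bag' t ↔ ∃ e ∈ D.bag t, v ∈ (e : Sym2 V) := by
    intro t v
    simp [bag', mem_ends]
  -- construct the decomposition of G
  let D' : TreeDecomp G :=
  { ι := D.ι
    instFin := D.instFin
    T := D.T
    isTree := D.isTree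
    bag := bag'
    bag_cover := by
      intro v
      obtain ⟨u, hu⟩ := hiso v
      let e : G.edgeSet := ⟨s(u, v), hu⟩
      obtain ⟨t, ht⟩ := D.bag_cover e
      exact ⟨t, (mem_bag' t v).2 ⟨e, ht, by simp [e]⟩⟩
    bag_edge := by
      intro u v huv
      let e : G.edgeSet := ⟨s(u, v), huv⟩
      obtain ⟨t, ht⟩ := D.bag_cover e
      exact ⟨t, (mem_bag' t u).2 ⟨e, ht, by simp [e]⟩,
        (mem_bag' t v).2 ⟨e, ht, by simp [e]⟩⟩
    bag_conn := by
      intro v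
      rw [SimpleGraph.connected_iff]
      have key : ∀ (e : G.edgeSet), v ∈ (e : Sym2 V) →
          {t : D.ι | e ∈ D.bag t} ⊆ {t : D.ι | v ∈ bag' t} := by
        intro e hv t ht
        exact (mem_bag' t v).2 ⟨e, ht, hv⟩
      refine ⟨?_, ?_⟩
      · rintro ⟨x, hx⟩ ⟨y, hy⟩
        rw [Set.mem_setOf_eq, mem_bag'] at hx hy
        obtain ⟨e₁, he₁, hv₁⟩ := hx
        obtain ⟨e₂, he₂, hv₂⟩ := hy
        by_cases hee : e₁ = e₂
        · subst hee
          have hc := (D.bag_conn e₁).preconnected ⟨x, he₁⟩ ⟨y, he₂⟩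
          exact reach_mono (key e₁ hv₁) he₁ he₂ hc
        · have hadj : G.lineGraph.Adj e₁ e₂ :=
            SimpleGraph.lineGraph_adj_iff_exists.2 ⟨hee, v, hv₁, hv₂⟩
          obtain ⟨z, hz₁, hz₂⟩ := D.bag_edge e₁ e₂ hadj
          have hc₁ := (D.bag_conn e₁).preconnected ⟨x, he₁⟩ ⟨z, hz₁⟩
          have hc₂ := (D.bag_conn e₂).preconnected ⟨z, hz₂⟩ ⟨y, he₂⟩
          exact (reach_mono (key e₁ hv₁) he₁ hz₁ hc₁).trans
            (reach_mono (key e₂ hv₂) hz₂ he₂ hc₂)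
      · obtain ⟨u, hu⟩ := hiso v
        let e : G.edgeSet := ⟨s(u, v), hu⟩
        obtain ⟨t, ht⟩ := D.bag_cover e
        exact ⟨⟨t, (mem_bag' t v).2 ⟨e, ht, by simp [e]⟩⟩⟩ }
  -- width bound
  have hwidth : D'.width ≤ 2 * D.width + 1 := by
    have hsupL : 1 ≤ (@Finset.univ D.ι D.instFin).sup (fun t => (D.bag t).card) := by
      obtain ⟨s, hs⟩ := hE
      have hs' : s ∈ G.edgeSet := SimpleGraph.mem_edgeFinset.1 hs
      obtain ⟨t, ht⟩ := D.bag_cover ⟨s, hs'⟩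
      calc 1 ≤ (D.bag t).card := Finset.card_pos.2 ⟨_, ht⟩
        _ ≤ _ := Finset.le_sup (f := fun t => (D.bag t).card) (Finset.mem_univ t)
    have hsup : (@Finset.univ D.ι D.instFin).sup (fun t => (bag' t).card) ≤
        2 * (@Finset.univ D.ι D.instFin).sup (fun t => (D.bag t).card) := by
      apply Finset.sup_le
      intro t _
      calc (bag' t).card ≤ ∑ e ∈ D.bag t, (ends (e : Sym2 V)).card :=
            Finset.card_biUnion_le
        _ ≤ ∑ _e ∈ D.bag t, 2 := Finset.sum_le_sum (fun e _ => card_ends _)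
        _ = 2 * (D.bag t).card := by rw [Finset.sum_const, smul_eq_mul, mul_comm]
        _ ≤ 2 * _ := by
            exact Nat.mul_le_mul_left 2 (Finset.le_sup (f := fun t => (D.bag t).card) (Finset.mem_univ t))
    show (@Finset.univ D.ι D.instFin).sup (fun t => (bag' t).card) - 1 ≤
        2 * ((@Finset.univ D.ι D.instFin).sup (fun t => (D.bag t).card) - 1) + 1
    omega
  calc treewidth G ≤ D'.width := Nat.sInf_le ⟨D', rfl⟩
    _ ≤ 2 * D.width + 1 := hwidth
    _ = 2 * treewidth G.lineGraph + 1 := by rw [treewidth, hD]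
end

section
/- Let G' be a finite simple graph on an n-element vertex set, let u ∈ V(G'), and let the neighborhood of u in G' be partitioned as N(u) = A ⊔ A'. Let Ḡ be the induced subgraph of G' on V(G')∖{u}, and let G be the simple graph on vertex set (V(G')∖{u}) ∪ {v, w, v'} (three new vertices) whose edges are the edges of Ḡ together with {v,a} for each a ∈ A, {v',a'} for each a' ∈ A', and {v,w}, {w,v'}. Then contracting qubit w of |G⟩ against |+⟩ gives ⟨+|_w |G⟩ = (1/2)·( |0⟩_v |0⟩_{v'} ⊗ |Ḡ⟩ + |1⟩_v |1⟩_{v'} ⊗ Z[A ∪ A'] |Ḡ⟩ ), where |b⟩_v |b'⟩_{v'} ⊗ |S'⟩ denotes the computational basis state of the qubits (V(G')∖{u}) ∪ {v,v'} in which v has value b, v' has value b', and the remaining qubits are given by S' ⊆ V(G')∖{u}. -/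
/-- The number of edges of `H` with both endpoints in `S`. -/
noncomputable def edgesIn {W : Type} (H : SimpleGraph W) (S : Finset W) : ℕ :=
  Set.ncard {e : Sym2 W | e ∈ H.edgeSet ∧ ∀ x ∈ e, x ∈ S}

/-- The graph state `|H⟩ = 2^{-m/2} ∑_{S ⊆ W} (-1)^{e(S)} |S⟩`, given by its coordinates in
the computational basis indexed by the subsets `S` of the vertex set. -/
noncomputable def graphState {W : Type} [Fintype W] (H : SimpleGraph W) : Finset W → ℂ :=
  fun S => (-1 : ℂ) ^ edgesIn H S / ((Real.sqrt 2 : ℝ) : ℂ) ^ Fintype.card W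

/-- Contraction of the qubit `w` against `|+⟩ = (|0⟩ + |1⟩)/√2`: the linear map sending each
basis state `|S⟩` to `2^{-1/2} |S \ {w}⟩`, expressed on coordinates. -/
noncomputable def contractPlus {W : Type} [DecidableEq W] (w : W)
    (ψ : Finset W → ℂ) : Finset {x : W // x ≠ w} → ℂ :=
  fun S =>
    (ψ (S.map (Function.Embedding.subtype fun x => x ≠ w)) +
     ψ (insert w (S.map (Function.Embedding.subtype fun x => x ≠ w)))) /
      ((Real.sqrt 2 : ℝ) : ℂ)

/-- Contraction of the qubit `w` against `|−⟩ = (|0⟩ − |1⟩)/√2`: the linear map sending each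
basis state `|S⟩` to `2^{-1/2} (−1)^{[w ∈ S]} |S \ {w}⟩`, expressed on coordinates. -/
noncomputable def contractMinus {W : Type} [DecidableEq W] (w : W)
    (ψ : Finset W → ℂ) : Finset {x : W // x ≠ w} → ℂ :=
  fun S =>
    (ψ (S.map (Function.Embedding.subtype fun x => x ≠ w)) -
     ψ (insert w (S.map (Function.Embedding.subtype fun x => x ≠ w)))) /
      ((Real.sqrt 2 : ℝ) : ℂ)

/-- The diagonal operator `Z[B]`, sending `|S⟩` to `(-1)^{|B ∩ S|} |S⟩`. -/
noncomputable def Zop {U : Type} [DecidableEq U] (B : Finset U) (φ : Finset U → ℂ) :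
    Finset U → ℂ :=
  fun S => (-1 : ℂ) ^ (B ∩ S).card * φ S

/-- The vertex set `(V(G') \ {u}) ∪ {v, w, v'}`: the three new vertices `v`, `w`, `v'` are
`Sum.inr 0`, `Sum.inr 1`, `Sum.inr 2` respectively. -/
abbrev BigVert (V' : Type) (u : V') : Type := {x : V' // x ≠ u} ⊕ Fin 3

/-- The relation generating the graph `G`: the edges of the induced subgraph of `G'` on
`V(G') \ {u}`, together with `{v, a}` for `a ∈ A`, `{v', a'}` for `a' ∈ A'`, and the path
edges `{v, w}`, `{w, v'}`. -/
def bigRel {V' : Type} (G' : SimpleGraph V') (u : V') (A A' : Finset V') :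
    BigVert V' u → BigVert V' u → Prop
  | Sum.inl a, Sum.inl b => G'.Adj a.val b.val
  | Sum.inl a, Sum.inr i => (i = 0 ∧ a.val ∈ A) ∨ (i = 2 ∧ a.val ∈ A')
  | Sum.inr i, Sum.inr j => (i = 0 ∧ j = 1) ∨ (i = 1 ∧ j = 2)
  | Sum.inr _, Sum.inl _ => False

/-- The graph `G` obtained from `G'` by replacing the vertex `u` by the path `v - w - v'`,
with `v` adjacent to the neighbors of `u` in `A` and `v'` to those in `A'`. -/
def bigG {V' : Type} (G' : SimpleGraph V') (u : V') (A A' : Finset V') :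
    SimpleGraph (BigVert V' u) := SimpleGraph.fromRel (bigRel G' u A A')

/-- The inserted middle vertex `w`. -/
abbrev wVert (V' : Type) (u : V') : BigVert V' u := Sum.inr 1

/-- The vertex set after contracting the qubit `w`. -/
abbrev RemVert (V' : Type) (u : V') : Type := {x : BigVert V' u // x ≠ wVert V' u}

/-- The inserted vertex `v`, as a vertex of the remaining qubits. -/
def vVert (V' : Type) (u : V') : RemVert V' u :=
  ⟨Sum.inr 0, fun h => absurd (Sum.inr.inj h) (by decide)⟩

/-- The inserted vertex `v'`, as a vertex of the remaining qubits. -/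
def v'Vert (V' : Type) (u : V') : RemVert V' u :=
  ⟨Sum.inr 2, fun h => absurd (Sum.inr.inj h) (by decide)⟩

/-- The restriction of a subset `T` of the remaining qubits to the qubits `V(G') \ {u}`. -/
def restrictT {V' : Type} [Fintype V'] [DecidableEq V'] (u : V')
    (T : Finset (RemVert V' u)) : Finset {x : V' // x ≠ u} :=
  Finset.univ.filter (fun a : {x : V' // x ≠ u} =>
    (⟨Sum.inl a, Sum.inl_ne_inr⟩ : RemVert V' u) ∈ T)

/-- `extendVV u bv bv' φ` is the state `|bv⟩_v |bv'⟩_{v'} ⊗ φ` on the qubits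
`(V(G') \ {u}) ∪ {v, v'}`, expressed on coordinates. -/
noncomputable def extendVV {V' : Type} [Fintype V'] [DecidableEq V'] (u : V')
    (bv bv' : Bool) (φ : Finset {x : V' // x ≠ u} → ℂ) : Finset (RemVert V' u) → ℂ :=
  fun T =>
    if ((vVert V' u ∈ T) ↔ bv = true) ∧ ((v'Vert V' u ∈ T) ↔ bv' = true) then
      φ (restrictT u T)
    else 0

/-!
Adding a vertex `w ∉ S` to `S` adds exactly `|N(w) ∩ S|` edges, so the `|0⟩_w` and `|1⟩_w`
components of `|G⟩` over the same `S` differ by the sign `(-1)^{|N(w) ∩ S|}`. Here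
`N(w) = {v, v'}`: the two components cancel unless `v` and `v'` are both in `S` or both out of
it. In the first case the edges from `v` and `v'` into `Ḡ` contribute the sign
`(-1)^{|A ∩ S| + |A' ∩ S|} = (-1)^{|(A ∪ A') ∩ S|}`, which is `Z[A ∪ A']`.
-/

open Finset

section GraphStates
variable {W : Type} (H : SimpleGraph W)

theorem edgesIn_eq_card_filter_sym2 [DecidableRel H.Adj] (S : Finset W) :
    edgesIn H S = #{e ∈ S.sym2 | e ∈ H.edgeSet} := by
  rw [edgesIn, ← Set.ncard_coe_finset]
  congr 1
  ext e
  simp [and_comm]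

theorem edgesIn_insert [DecidableEq W] [DecidableRel H.Adj] {w : W} {S : Finset W}
    (hw : w ∉ S) :
    edgesIn H (insert w S) = edgesIn H S + #{x ∈ S | H.Adj w x} := by
  rw [← cons_eq_insert w S hw, edgesIn_eq_card_filter_sym2, edgesIn_eq_card_filter_sym2,
    sym2_cons, filter_disjUnion, card_disjUnion, filter_map, card_map, add_comm, filter_cons]
  simp

theorem edgesIn_map {V : Type} (f : V ↪ W) (S : Finset V) :
    edgesIn H (S.map f) = edgesIn (H.comap f) S := by
  classical
  rw [edgesIn_eq_card_filter_sym2, edgesIn_eq_card_filter_sym2, sym2_map, filter_map, card_map]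
  congr 2
  ext e
  induction e using Sym2.ind
  simp

end GraphStates

theorem contractPlus_graphState_apply {W : Type} [Fintype W] [DecidableEq W]
    (H : SimpleGraph W) [DecidableRel H.Adj] (w : W) (T : Finset {x // x ≠ w}) :
    contractPlus w (graphState H) T =
      (-1) ^ edgesIn H (T.map (.subtype (· ≠ w))) *
        (1 + (-1) ^ #{x ∈ T.map (.subtype (· ≠ w)) | H.Adj w x}) /
        ((√2 : ℝ) : ℂ) ^ (Fintype.card W + 1) := by
  have hw : w ∉ T.map (.subtype (· ≠ w)) := by simp
  rw [contractPlus, graphState, graphState, edgesIn_insert H hw]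
  ring

section BigGraph
variable {V' : Type} (G' : SimpleGraph V') (u : V') (A A' : Finset V')

@[simp]
theorem bigG_adj_inl_inl (a b : {x : V' // x ≠ u}) :
    (bigG G' u A A').Adj (Sum.inl a) (Sum.inl b) ↔ G'.Adj a b := by
  simp only [bigG, bigRel, SimpleGraph.fromRel_adj, ne_eq, Sum.inl.injEq, G'.adj_comm b, or_self,
    and_iff_right_iff_imp]
  exact fun h hab => h.ne (congrArg Subtype.val hab)

@[simp]
theorem bigG_adj_inr_inl (i : Fin 3) (a : {x : V' // x ≠ u}) :
    (bigG G' u A A').Adj (Sum.inr i) (Sum.inl a) ↔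
      i = 0 ∧ a.1 ∈ A ∨ i = 2 ∧ a.1 ∈ A' := by
  simp [bigG, bigRel]

@[simp]
theorem bigG_adj_inr_inr (i j : Fin 3) :
    (bigG G' u A A').Adj (Sum.inr i) (Sum.inr j) ↔
      i = 0 ∧ j = 1 ∨ i = 1 ∧ j = 0 ∨ i = 1 ∧ j = 2 ∨ i = 2 ∧ j = 1 := by
  simp only [bigG, bigRel, SimpleGraph.fromRel_adj, ne_eq, Sum.inr.injEq]
  omega

theorem comap_inl_bigG : (bigG G' u A A').comap Sum.inl = G'.comap Subtype.val := by
  ext a b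
  simp

theorem edgesIn_bigG_map_inl (T' : Finset {x : V' // x ≠ u}) :
    edgesIn (bigG G' u A A') (T'.map .inl) = edgesIn (G'.comap Subtype.val) T' := by
  rw [edgesIn_map]
  exact congrArg (edgesIn · T') (comap_inl_bigG G' u A A')

variable [DecidableEq V']

theorem card_filter_adj_wVert [DecidableRel (bigG G' u A A').Adj] (T : Finset (RemVert V' u)) :
    #{x ∈ T.map (.subtype (· ≠ wVert V' u)) | (bigG G' u A A').Adj (wVert V' u) x} =
      (if vVert V' u ∈ T then 1 else 0) + (if v'Vert V' u ∈ T then 1 else 0) := by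
  have hadj : ∀ x, (bigG G' u A A').Adj (wVert V' u) x ↔ x = Sum.inr 0 ∨ x = Sum.inr 2 := by
    rintro (a | i)
    · simp
    · fin_cases i <;> simp
  simp only [hadj, filter_or, filter_eq']
  rw [card_union_of_disjoint (by split_ifs <;> simp)]
  simp only [mem_map, Function.Embedding.coe_subtype]
  split_ifs <;> simp_all [vVert, v'Vert]

theorem edgesIn_bigG_insert_insert (T' : Finset {x : V' // x ≠ u}) :
    edgesIn (bigG G' u A A') (insert (Sum.inr 2) (insert (Sum.inr 0) (T'.map .inl))) =
      edgesIn (G'.comap Subtype.val) T' + #{a ∈ T' | a.1 ∈ A} + #{a ∈ T' | a.1 ∈ A'} := by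
  classical
  rw [edgesIn_insert _ (by simp), edgesIn_insert _ (by simp), edgesIn_bigG_map_inl]
  simp [filter_insert, filter_map]

end BigGraph

section Restrict
variable {V' : Type} [Fintype V'] [DecidableEq V'] {u : V'} {T : Finset (RemVert V' u)}

theorem map_subtype_eq_of_notMem (hv : vVert V' u ∉ T) (hv' : v'Vert V' u ∉ T) :
    T.map (.subtype (· ≠ wVert V' u)) = (restrictT u T).map .inl := by
  ext (a | i)
  · simp [restrictT]
  · fin_cases i <;> simp_all [vVert, v'Vert]

theorem map_subtype_eq_of_mem (hv : vVert V' u ∈ T) (hv' : v'Vert V' u ∈ T) :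
    T.map (.subtype (· ≠ wVert V' u)) =
      insert (Sum.inr 2) (insert (Sum.inr 0) ((restrictT u T).map .inl)) := by
  ext (a | i)
  · simp [restrictT]
  · fin_cases i <;> simp_all [vVert, v'Vert]

end Restrict

theorem card_filter_mem_union_of_disjoint {α β : Type} [DecidableEq α] [DecidableEq β]
    {A A' : Finset β} (h : Disjoint A A') (f : α → β) (s : Finset α) :
    #{a ∈ s | f a ∈ A ∪ A'} = #{a ∈ s | f a ∈ A} + #{a ∈ s | f a ∈ A'} := by
  rw [← card_union_of_disjoint, ← filter_or]
  · simp only [mem_union]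
  · exact disjoint_left.2 fun _ ha ha' =>
      disjoint_left.1 h (mem_filter.1 ha).2 (mem_filter.1 ha').2

theorem ofReal_sqrt_two_pow_add_four (n : ℕ) :
    ((√2 : ℝ) : ℂ) ^ (n + 4) = 4 * ((√2 : ℝ) : ℂ) ^ n := by
  rw [pow_add, mul_comm, show ((√2 : ℝ) : ℂ) ^ 4 = ((√2 ^ 2) ^ 2 : ℝ) by push_cast; ring]
  norm_num

theorem contractPlus_w_graphState_general
    {V' : Type} [Fintype V'] [DecidableEq V'] (G' : SimpleGraph V') (u : V')
    (A A' : Finset V')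
    (hdisj : Disjoint A A') :
    contractPlus (wVert V' u) (graphState (bigG G' u A A')) =
      fun T : Finset (RemVert V' u) =>
        (extendVV u false false (graphState (SimpleGraph.comap Subtype.val G')) T +
         extendVV u true true
           (Zop (Finset.univ.filter fun a : {x : V' // x ≠ u} => a.val ∈ A ∪ A')
             (graphState (SimpleGraph.comap Subtype.val G'))) T) / 2 := by
  classical
  funext T
  have hcard : Fintype.card (BigVert V' u) + 1 = Fintype.card {x : V' // x ≠ u} + 4 := by
    simp
  rw [contractPlus_graphState_apply, card_filter_adj_wVert, hcard, ofReal_sqrt_two_pow_add_four]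
  by_cases hv : vVert V' u ∈ T <;> by_cases hv' : v'Vert V' u ∈ T
  · rw [map_subtype_eq_of_mem hv hv', edgesIn_bigG_insert_insert]
    simp only [extendVV, Zop, filter_inter, univ_inter, card_filter_mem_union_of_disjoint hdisj]
    simp only [hv, hv', graphState, true_iff, Bool.false_eq_true, and_self, if_true, if_false,
      zero_add]
    field_simp
    ring
  · simp [extendVV, hv, hv']
  · simp [extendVV, hv, hv']
  · rw [map_subtype_eq_of_notMem hv hv', edgesIn_bigG_map_inl]
    simp only [extendVV, hv, hv', graphState, iff_true, Bool.false_eq_true, and_self, if_true,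
      if_false, add_zero]
    field_simp
    ring

/-- Let the neighborhood of `u` in `G'` be partitioned as `A ⊔ A'`, let
`Ḡ` be the induced subgraph of `G'` on `V(G') \ {u}`, and let `G` be the graph obtained
by replacing `u` by the path `v - w - v'` as above.  Contracting the qubit `w` of `|G⟩`
against `|+⟩` gives
`⟨+|_w |G⟩ = (1/2)·(|0⟩_v |0⟩_{v'} ⊗ |Ḡ⟩ + |1⟩_v |1⟩_{v'} ⊗ Z[A ∪ A'] |Ḡ⟩)`. -/
theorem contractPlus_w_graphState
    {V' : Type} [Fintype V'] [DecidableEq V'] (G' : SimpleGraph V') (u : V')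
    (A A' : Finset V') (hN : (↑A ∪ ↑A' : Set V') = G'.neighborSet u)
    (hdisj : Disjoint A A') :
    contractPlus (wVert V' u) (graphState (bigG G' u A A')) =
      fun T : Finset (RemVert V' u) =>
        (extendVV u false false (graphState (SimpleGraph.comap Subtype.val G')) T +
         extendVV u true true
           (Zop (Finset.univ.filter fun a : {x : V' // x ≠ u} => a.val ∈ A ∪ A')
             (graphState (SimpleGraph.comap Subtype.val G'))) T) / 2 :=
  contractPlus_w_graphState_general G' u A A' hdisj
end
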